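/- Let M be any set of measurements on a quantum system of Hilbert space dimension k, G a set of states on that system, τ = I/k the maximally mixed state, and for 0 < x ≤ 1 let G_x := { xσ + (1−x)τ : σ ∈ G }. If G is star-shaped with respect to τ (so that G_x ⊆ G), then for every state ρ: E^{(G)}_{r,M}(ρ) ≤ E^{(G_x)}_{r,M}(ρ) ≤ E^{(G)}_{r,M}(ρ) − log x. -/

import Mathlib

open Matrix Filter
open scoped Kronecker ENNReal Classical ComplexOrder

noncomputable section

namespace QIT

/-- A (finite-dimensional) quantum state: positive semidefinite with unit trace. -/
def IsState {d : Type} [Fintype d] (ρ : Matrix d d ℂ) : Prop :=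
  ρ.PosSemidef ∧ ρ.trace = 1

/-- Partial trace over the first tensor factor. -/
def ptrFst {X Y : Type} [Fintype X] (M : Matrix (X × Y) (X × Y) ℂ) : Matrix Y Y ℂ :=
  Matrix.of fun b b' => ∑ a, M (a, b) (a, b')

/-- Partial trace over the second tensor factor. -/
def ptrSnd {X Y : Type} [Fintype Y] (M : Matrix (X × Y) (X × Y) ℂ) : Matrix X X ℂ :=
  Matrix.of fun a a' => ∑ b, M (a, b) (a', b)

/-- For a tripartite state on (A ⊗ B) ⊗ E, trace out the middle factor B, giving A ⊗ E. -/
def ptrMid {X Y Z : Type} [Fintype Y] (M : Matrix ((X × Y) × Z) ((X × Y) × Z) ℂ) :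
    Matrix (X × Z) (X × Z) ℂ :=
  Matrix.of fun p q => ∑ b, M ((p.1, b), p.2) ((q.1, b), q.2)

/-- For a tripartite state on (A ⊗ B) ⊗ E, trace out the leftmost factor A, giving B ⊗ E. -/
def ptrLeft {X Y Z : Type} [Fintype X] (M : Matrix ((X × Y) × Z) ((X × Y) × Z) ℂ) :
    Matrix (Y × Z) (Y × Z) ℂ :=
  Matrix.of fun p q => ∑ a, M ((a, p.1), p.2) ((a, q.1), q.2)

/-- Separable states on a bipartite system. -/
def IsSeparable {X Y : Type} [Fintype X] [Fintype Y]
    (σ : Matrix (X × Y) (X × Y) ℂ) : Prop :=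
  ∃ (n : ℕ) (p : Fin n → ℝ) (ρ1 : Fin n → Matrix X X ℂ) (ρ2 : Fin n → Matrix Y Y ℂ),
    (∀ i, 0 ≤ p i) ∧ (∑ i, p i) = 1 ∧ (∀ i, IsState (ρ1 i)) ∧ (∀ i, IsState (ρ2 i)) ∧
    σ = ∑ i, (p i : ℂ) • (ρ1 i ⊗ₖ ρ2 i)

/-- Matrix logarithm (base 2) of a Hermitian matrix via the spectral decomposition,
with the convention log 0 = 0 on the kernel; junk value 0 on non-Hermitian input. -/
def matLogb {d : Type} [Fintype d] [DecidableEq d] (A : Matrix d d ℂ) : Matrix d d ℂ :=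
  if h : A.IsHermitian then
    (h.eigenvectorUnitary : Matrix d d ℂ) *
      Matrix.diagonal (fun i => ((Real.logb 2 (h.eigenvalues i) : ℝ) : ℂ)) *
      star (h.eigenvectorUnitary : Matrix d d ℂ)
  else 0

/-- Quantum relative entropy (base 2), +∞ if the support condition fails.  (For positive
semidefinite `σ`, the condition `∀ v, σ v = 0 → ρ v = 0` on kernels is equivalent to
supp ρ ⊆ supp σ.) -/
def qRelEnt {d : Type} [Fintype d] [DecidableEq d] (ρ σ : Matrix d d ℂ) : ℝ≥0∞ :=
  if ∀ v : d → ℂ, σ.mulVec v = 0 → ρ.mulVec v = 0 then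
    ENNReal.ofReal ((ρ * (matLogb ρ - matLogb σ)).trace.re)
  else ⊤

/-- Relative entropy of entanglement. -/
def Er {X Y : Type} [Fintype X] [DecidableEq X] [Fintype Y] [DecidableEq Y]
    (ρ : Matrix (X × Y) (X × Y) ℂ) : ℝ≥0∞ :=
  ⨅ (σ : Matrix (X × Y) (X × Y) ℂ) (_ : IsSeparable σ), qRelEnt ρ σ

/-- n-fold tensor power of a bipartite state, arranged as a state on Aⁿ ⊗ Bⁿ. -/
def tpow {X Y : Type} (ρ : Matrix (X × Y) (X × Y) ℂ) (n : ℕ) :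
    Matrix ((Fin n → X) × (Fin n → Y)) ((Fin n → X) × (Fin n → Y)) ℂ :=
  Matrix.of fun x y => ∏ i, ρ (x.1 i, x.2 i) (y.1 i, y.2 i)

/-- n-fold tensor power of a tripartite state on (A⊗B)⊗E, arranged on (Aⁿ⊗Bⁿ)⊗Eⁿ. -/
def tpow3 {X Y Z : Type} (ρ : Matrix ((X × Y) × Z) ((X × Y) × Z) ℂ) (n : ℕ) :
    Matrix (((Fin n → X) × (Fin n → Y)) × (Fin n → Z))
           (((Fin n → X) × (Fin n → Y)) × (Fin n → Z)) ℂ :=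
  Matrix.of fun u v => ∏ i, ρ ((u.1.1 i, u.1.2 i), u.2 i) ((v.1.1 i, v.1.2 i), v.2 i)

/-- Regularized relative entropy of entanglement. -/
def ErReg {X Y : Type} [Fintype X] [DecidableEq X] [Fintype Y] [DecidableEq Y]
    (ρ : Matrix (X × Y) (X × Y) ℂ) : ℝ≥0∞ :=
  Filter.limsup (fun n : ℕ => Er (tpow ρ n) / (n : ℝ≥0∞)) Filter.atTop

/-- Classical relative entropy (base 2) of two finitely supported "probability vectors". -/
def klDiv2 {X : Type} [Fintype X] (P Q : X → ℝ) : ℝ≥0∞ :=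
  if ∀ x, Q x = 0 → P x = 0 then
    ENNReal.ofReal (∑ x, P x * Real.logb 2 (P x / Q x))
  else ⊤

/-- Outcome distribution of a POVM on a state. -/
def mProb {d X : Type} [Fintype d] (M : X → Matrix d d ℂ) (ρ : Matrix d d ℂ) : X → ℝ :=
  fun x => ((ρ * M x).trace).re

/-- POVM condition. -/
def IsPOVM {d X : Type} [Fintype d] [DecidableEq d] [Fintype X]
    (M : X → Matrix d d ℂ) : Prop :=
  (∀ x, (M x).PosSemidef) ∧ (∑ x, M x) = 1

/-- Conditions for a one-way (A→B) LOCC measurement with POVM elements R_k ⊗ S_{k,ℓ}. -/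
def OneLOCCData {X Y : Type} [Fintype X] [DecidableEq X] [Fintype Y] [DecidableEq Y]
    {k l : ℕ} (R : Fin k → Matrix X X ℂ) (S : Fin k → Fin l → Matrix Y Y ℂ) : Prop :=
  (∀ i, (R i).PosSemidef) ∧ (∑ i, R i) = 1 ∧
    (∀ i j, (S i j).PosSemidef) ∧ (∀ i, (∑ j, S i j) = 1)

/-- The POVM of a one-way LOCC measurement. -/
def oneLOCCPOVM {X Y : Type} {k l : ℕ} (R : Fin k → Matrix X X ℂ)
    (S : Fin k → Fin l → Matrix Y Y ℂ) : Fin k × Fin l → Matrix (X × Y) (X × Y) ℂ :=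
  fun p => R p.1 ⊗ₖ S p.1 p.2

/-- One-way-LOCC restricted relative entropy of entanglement E_{r,1-LOCC}. -/
def ErOneLOCC {X Y : Type} [Fintype X] [DecidableEq X] [Fintype Y] [DecidableEq Y]
    (ρ : Matrix (X × Y) (X × Y) ℂ) : ℝ≥0∞ :=
  ⨅ (σ : Matrix (X × Y) (X × Y) ℂ) (_ : IsSeparable σ),
    ⨆ (k : ℕ) (l : ℕ) (R : Fin k → Matrix X X ℂ) (S : Fin k → Fin l → Matrix Y Y ℂ)
      (_ : OneLOCCData R S),
      klDiv2 (mProb (oneLOCCPOVM R S) ρ) (mProb (oneLOCCPOVM R S) σ)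

/-- Regularized E_{r,1-LOCC}. -/
def ErOneLOCCReg {X Y : Type} [Fintype X] [DecidableEq X] [Fintype Y] [DecidableEq Y]
    (ρ : Matrix (X × Y) (X × Y) ℂ) : ℝ≥0∞ :=
  Filter.limsup (fun n : ℕ => ErOneLOCC (tpow ρ n) / (n : ℝ≥0∞)) Filter.atTop

/-- LO (product) restricted relative entropy of entanglement E_{r,LO}. -/
def ErLO {X Y : Type} [Fintype X] [DecidableEq X] [Fintype Y] [DecidableEq Y]
    (ρ : Matrix (X × Y) (X × Y) ℂ) : ℝ≥0∞ :=
  ⨅ (σ : Matrix (X × Y) (X × Y) ℂ) (_ : IsSeparable σ),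
    ⨆ (k : ℕ) (l : ℕ) (R : Fin k → Matrix X X ℂ) (S : Fin l → Matrix Y Y ℂ)
      (_ : (∀ i, (R i).PosSemidef) ∧ (∑ i, R i) = 1 ∧
            (∀ j, (S j).PosSemidef) ∧ (∑ j, S j) = 1),
      klDiv2 (mProb (fun p : Fin k × Fin l => R p.1 ⊗ₖ S p.2) ρ)
             (mProb (fun p : Fin k × Fin l => R p.1 ⊗ₖ S p.2) σ)

def ErLOReg {X Y : Type} [Fintype X] [DecidableEq X] [Fintype Y] [DecidableEq Y]
    (ρ : Matrix (X × Y) (X × Y) ℂ) : ℝ≥0∞ :=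
  Filter.limsup (fun n : ℕ => ErLO (tpow ρ n) / (n : ℝ≥0∞)) Filter.atTop

/-- Families of pairs of local Kraus-operator products realizable by a finite-round
LOCC protocol (with two-way classical communication) on a bipartite system. -/
inductive LOCCFam (dA dB : Type) [Fintype dA] [DecidableEq dA] [Fintype dB] [DecidableEq dB] :
    (dA' dB' X : Type) → (X → Matrix dA' dA ℂ) → (X → Matrix dB' dB ℂ) → Prop
  | base : LOCCFam dA dB dA dB PUnit (fun _ => 1) (fun _ => 1)
  | stepA {dA' dB' X : Type} {a : X → Matrix dA' dA ℂ} {b : X → Matrix dB' dB ℂ}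
      (h : LOCCFam dA dB dA' dB' X a b)
      {dA'' K : Type} [Fintype dA'] [DecidableEq dA'] [Fintype dA''] [Fintype K]
      (κ : X → K → Matrix dA'' dA' ℂ)
      (hκ : ∀ x, (∑ j, (κ x j)ᴴ * κ x j) = (1 : Matrix dA' dA' ℂ)) :
      LOCCFam dA dB dA'' dB' (X × K) (fun p => κ p.1 p.2 * a p.1) (fun p => b p.1)
  | stepB {dA' dB' X : Type} {a : X → Matrix dA' dA ℂ} {b : X → Matrix dB' dB ℂ}
      (h : LOCCFam dA dB dA' dB' X a b)
      {dB'' K : Type} [Fintype dB'] [DecidableEq dB'] [Fintype dB''] [Fintype K]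
      (κ : X → K → Matrix dB'' dB' ℂ)
      (hκ : ∀ x, (∑ j, (κ x j)ᴴ * κ x j) = (1 : Matrix dB' dB' ℂ)) :
      LOCCFam dA dB dA' dB'' (X × K) (fun p => a p.1) (fun p => κ p.1 p.2 * b p.1)
  | relabel {dA' dB' X : Type} {a : X → Matrix dA' dA ℂ} {b : X → Matrix dB' dB ℂ}
      (h : LOCCFam dA dB dA' dB' X a b) {Y : Type} (e : Y ≃ X) :
      LOCCFam dA dB dA' dB' Y (fun y => a (e y)) (fun y => b (e y))

/-- A POVM implementable by (two-way) LOCC: outcomes are coarse-grainings of the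
histories of an LOCC protocol, with POVM elements (aᴴa) ⊗ (bᴴb). -/
def IsLOCCPOVM {X Y : Type} [Fintype X] [DecidableEq X] [Fintype Y] [DecidableEq Y]
    {m : ℕ} (M : Fin m → Matrix (X × Y) (X × Y) ℂ) : Prop :=
  ∃ (p q n : ℕ) (a : Fin n → Matrix (Fin p) X ℂ) (b : Fin n → Matrix (Fin q) Y ℂ)
    (g : Fin n → Fin m),
    LOCCFam X Y (Fin p) (Fin q) (Fin n) a b ∧
    ∀ y, M y = ∑ x ∈ Finset.univ.filter (fun x => g x = y),
                  ((a x)ᴴ * a x) ⊗ₖ ((b x)ᴴ * b x)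

/-- LOCC restricted relative entropy of entanglement E_{r,LOCC}. -/
def ErLOCC {X Y : Type} [Fintype X] [DecidableEq X] [Fintype Y] [DecidableEq Y]
    (ρ : Matrix (X × Y) (X × Y) ℂ) : ℝ≥0∞ :=
  ⨅ (σ : Matrix (X × Y) (X × Y) ℂ) (_ : IsSeparable σ),
    ⨆ (m : ℕ) (M : Fin m → Matrix (X × Y) (X × Y) ℂ) (_ : IsLOCCPOVM M),
      klDiv2 (mProb M ρ) (mProb M σ)

def ErLOCCReg {X Y : Type} [Fintype X] [DecidableEq X] [Fintype Y] [DecidableEq Y]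
    (ρ : Matrix (X × Y) (X × Y) ℂ) : ℝ≥0∞ :=
  Filter.limsup (fun n : ℕ => ErLOCC (tpow ρ n) / (n : ℝ≥0∞)) Filter.atTop

/-- Separable (positive) operator. -/
def IsSepOp {X Y : Type} [Fintype X] [Fintype Y] (Q : Matrix (X × Y) (X × Y) ℂ) : Prop :=
  ∃ (n : ℕ) (a : Fin n → Matrix X X ℂ) (b : Fin n → Matrix Y Y ℂ),
    (∀ i, (a i).PosSemidef) ∧ (∀ i, (b i).PosSemidef) ∧ Q = ∑ i, a i ⊗ₖ b i

/-- SEP restricted relative entropy of entanglement E_{r,SEP}. -/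
def ErSEP {X Y : Type} [Fintype X] [DecidableEq X] [Fintype Y] [DecidableEq Y]
    (ρ : Matrix (X × Y) (X × Y) ℂ) : ℝ≥0∞ :=
  ⨅ (σ : Matrix (X × Y) (X × Y) ℂ) (_ : IsSeparable σ),
    ⨆ (m : ℕ) (M : Fin m → Matrix (X × Y) (X × Y) ℂ)
      (_ : IsPOVM M ∧ ∀ x, IsSepOp (M x)),
      klDiv2 (mProb M ρ) (mProb M σ)

def ErSEPReg {X Y : Type} [Fintype X] [DecidableEq X] [Fintype Y] [DecidableEq Y]
    (ρ : Matrix (X × Y) (X × Y) ℂ) : ℝ≥0∞ :=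
  Filter.limsup (fun n : ℕ => ErSEP (tpow ρ n) / (n : ℝ≥0∞)) Filter.atTop

/-- Partial transpose on the first factor. -/
def ptranspose {X Y : Type} (Q : Matrix (X × Y) (X × Y) ℂ) : Matrix (X × Y) (X × Y) ℂ :=
  Matrix.of fun p q => Q (q.1, p.2) (p.1, q.2)

/-- PPT restricted relative entropy of entanglement E_{r,PPT}. -/
def ErPPT {X Y : Type} [Fintype X] [DecidableEq X] [Fintype Y] [DecidableEq Y]
    (ρ : Matrix (X × Y) (X × Y) ℂ) : ℝ≥0∞ :=
  ⨅ (σ : Matrix (X × Y) (X × Y) ℂ) (_ : IsSeparable σ),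
    ⨆ (m : ℕ) (M : Fin m → Matrix (X × Y) (X × Y) ℂ)
      (_ : IsPOVM M ∧ ∀ x, (ptranspose (M x)).PosSemidef),
      klDiv2 (mProb M ρ) (mProb M σ)

def ErPPTReg {X Y : Type} [Fintype X] [DecidableEq X] [Fintype Y] [DecidableEq Y]
    (ρ : Matrix (X × Y) (X × Y) ℂ) : ℝ≥0∞ :=
  Filter.limsup (fun n : ℕ => ErPPT (tpow ρ n) / (n : ℝ≥0∞)) Filter.atTop

/-- Von Neumann entropy (base 2), via eigenvalues; junk value 0 on non-Hermitian input. -/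
def vnEntropy {d : Type} [Fintype d] [DecidableEq d] (ρ : Matrix d d ℂ) : ℝ :=
  if h : ρ.IsHermitian then -∑ i, h.eigenvalues i * Real.logb 2 (h.eigenvalues i) else 0

/-- Quantum conditional mutual information I(A;B|E) of a state on (A⊗B)⊗E. -/
def qcmi {X Y Z : Type} [Fintype X] [DecidableEq X] [Fintype Y] [DecidableEq Y]
    [Fintype Z] [DecidableEq Z] (ρ : Matrix ((X × Y) × Z) ((X × Y) × Z) ℂ) : ℝ :=
  vnEntropy (ptrMid ρ) + vnEntropy (ptrLeft ρ) - vnEntropy ρ - vnEntropy (ptrFst ρ)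

/-- Squashed entanglement (infimum over finite-dimensional extensions). -/
def Esq {X Y : Type} [Fintype X] [DecidableEq X] [Fintype Y] [DecidableEq Y]
    (ρ : Matrix (X × Y) (X × Y) ℂ) : ℝ≥0∞ :=
  ⨅ (e : ℕ) (ω : Matrix ((X × Y) × Fin e) ((X × Y) × Fin e) ℂ)
    (_ : IsState ω ∧ ptrSnd ω = ρ),
    ENNReal.ofReal (qcmi ω / 2)

/-- The classical extension Σ_i p_i ρ_i ⊗ |i⟩⟨i| of an ensemble. -/
def classExt {X Y : Type} {m : ℕ} (p : Fin m → ℝ)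
    (ρi : Fin m → Matrix (X × Y) (X × Y) ℂ) :
    Matrix ((X × Y) × Fin m) ((X × Y) × Fin m) ℂ :=
  Matrix.of fun u v => if u.2 = v.2 then (p u.2 : ℂ) * ρi u.2 u.1 v.1 else 0

/-- c-squashed entanglement (infimum over classical extensions). -/
def Esqc {X Y : Type} [Fintype X] [DecidableEq X] [Fintype Y] [DecidableEq Y]
    (ρ : Matrix (X × Y) (X × Y) ℂ) : ℝ≥0∞ :=
  ⨅ (m : ℕ) (p : Fin m → ℝ) (ρi : Fin m → Matrix (X × Y) (X × Y) ℂ)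
    (_ : (∀ i, 0 ≤ p i) ∧ (∑ i, p i) = 1 ∧ (∀ i, IsState (ρi i)) ∧
          (∑ i, (p i : ℂ) • ρi i) = ρ),
    ENNReal.ofReal (qcmi (classExt p ρi) / 2)

def EsqcReg {X Y : Type} [Fintype X] [DecidableEq X] [Fintype Y] [DecidableEq Y]
    (ρ : Matrix (X × Y) (X × Y) ℂ) : ℝ≥0∞ :=
  Filter.limsup (fun n : ℕ => Esqc (tpow ρ n) / (n : ℝ≥0∞)) Filter.atTop

/-- Mutual information I(X;Y) of a bipartite state. -/
def mutInfo {X Y : Type} [Fintype X] [DecidableEq X] [Fintype Y] [DecidableEq Y]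
    (ρ : Matrix (X × Y) (X × Y) ℂ) : ℝ :=
  vnEntropy (ptrSnd ρ) + vnEntropy (ptrFst ρ) - vnEntropy ρ

/-- Marginal on A⊗B of a state on (A⊗A')⊗(B⊗B'). -/
def margMain {X Y : Type} {a b : ℕ}
    (ω : Matrix ((X × Fin a) × (Y × Fin b)) ((X × Fin a) × (Y × Fin b)) ℂ) :
    Matrix (X × Y) (X × Y) ℂ :=
  Matrix.of fun p q => ∑ i, ∑ j, ω ((p.1, i), (p.2, j)) ((q.1, i), (q.2, j))

/-- Marginal on A'⊗B' of a state on (A⊗A')⊗(B⊗B'). -/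
def margAux {X Y : Type} [Fintype X] [Fintype Y] {a b : ℕ}
    (ω : Matrix ((X × Fin a) × (Y × Fin b)) ((X × Fin a) × (Y × Fin b)) ℂ) :
    Matrix (Fin a × Fin b) (Fin a × Fin b) ℂ :=
  Matrix.of fun p q => ∑ x, ∑ y, ω ((x, p.1), (y, p.2)) ((x, q.1), (y, q.2))

/-- Conditional entanglement of mutual information. -/
def EI {X Y : Type} [Fintype X] [DecidableEq X] [Fintype Y] [DecidableEq Y]
    (ρ : Matrix (X × Y) (X × Y) ℂ) : ℝ≥0∞ :=
  ⨅ (a : ℕ) (b : ℕ)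
    (ω : Matrix ((X × Fin a) × (Y × Fin b)) ((X × Fin a) × (Y × Fin b)) ℂ)
    (_ : IsState ω ∧ margMain ω = ρ),
    ENNReal.ofReal ((mutInfo ω - mutInfo (margAux ω)) / 2)

/-- An LOCC quantum channel between bipartite systems. -/
def IsLOCCChannel {X Y X' Y' : Type} [Fintype X] [DecidableEq X] [Fintype Y] [DecidableEq Y]
    [Fintype X'] [Fintype Y']
    (Λ : Matrix (X × Y) (X × Y) ℂ → Matrix (X' × Y') (X' × Y') ℂ) : Prop :=
  ∃ (n : ℕ) (a : Fin n → Matrix X' X ℂ) (b : Fin n → Matrix Y' Y ℂ),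
    LOCCFam X Y X' Y' (Fin n) a b ∧
    ∀ ω, Λ ω = ∑ x, (a x ⊗ₖ b x) * ω * (a x ⊗ₖ b x)ᴴ

/-- E_{r,→}: the LOCC-processed one-way LOCC relative entropy of entanglement. -/
def ErArrow {X Y : Type} [Fintype X] [DecidableEq X] [Fintype Y] [DecidableEq Y]
    (ρ : Matrix (X × Y) (X × Y) ℂ) : ℝ≥0∞ :=
  ⨆ (p : ℕ) (q : ℕ)
    (Λ : Matrix (X × Y) (X × Y) ℂ → Matrix (Fin p × Fin q) (Fin p × Fin q) ℂ)
    (_ : IsLOCCChannel Λ),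
    ErOneLOCC (Λ ρ)

def ErArrowReg {X Y : Type} [Fintype X] [DecidableEq X] [Fintype Y] [DecidableEq Y]
    (ρ : Matrix (X × Y) (X × Y) ℂ) : ℝ≥0∞ :=
  Filter.limsup (fun n : ℕ => ErArrow (tpow ρ n) / (n : ℝ≥0∞)) Filter.atTop

/-- Trace norm of a Hermitian matrix (junk value 0 on non-Hermitian input). -/
def traceNorm {d : Type} [Fintype d] [DecidableEq d] (M : Matrix d d ℂ) : ℝ :=
  if h : M.IsHermitian then ∑ i, |h.eigenvalues i| else 0

/-- The rank-d maximally entangled state Φ_d. -/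
def MES (d : ℕ) : Matrix (Fin d × Fin d) (Fin d × Fin d) ℂ :=
  Matrix.of fun p q => if p.1 = p.2 ∧ q.1 = q.2 then ((d : ℂ))⁻¹ else 0

/-- Distillable entanglement. -/
def Ed {X Y : Type} [Fintype X] [DecidableEq X] [Fintype Y] [DecidableEq Y]
    (ρ : Matrix (X × Y) (X × Y) ℂ) : ℝ≥0∞ :=
  ⨆ (dseq : ℕ → ℕ)
    (Λ : ∀ n : ℕ, Matrix ((Fin n → X) × (Fin n → Y)) ((Fin n → X) × (Fin n → Y)) ℂ →
          Matrix (Fin (dseq n) × Fin (dseq n)) (Fin (dseq n) × Fin (dseq n)) ℂ)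
    (_ : (∀ n, IsLOCCChannel (Λ n)) ∧
         Filter.Tendsto (fun n => traceNorm (Λ n (tpow ρ n) - MES (dseq n)))
           Filter.atTop (nhds 0)),
    Filter.liminf (fun n : ℕ => ENNReal.ofReal (Real.logb 2 (dseq n)) / (n : ℝ≥0∞))
      Filter.atTop

/-- A one-way LOCC (A→B) quantum instrument with classical output `Fin m` and quantum
output on B: Alice applies an instrument with outcomes k and Kraus operators A k i,
communicates k; Bob applies an instrument with classical outcome x and Kraus B k x j. -/
structure OneLOCCInstr (X Y : Type) [Fintype X] [DecidableEq X] [Fintype Y] [DecidableEq Y]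
    (m : ℕ) where
  nK : ℕ
  nI : ℕ
  nJ : ℕ
  A : Fin nK → Fin nI → Matrix X X ℂ
  B : Fin nK → Fin m → Fin nJ → Matrix Y Y ℂ
  hA : (∑ k, ∑ i, (A k i)ᴴ * A k i) = 1
  hB : ∀ k, (∑ x, ∑ j, (B k x j)ᴴ * B k x j) = 1

/-- The x-component of the instrument applied to a state of AB together with an
untouched environment E. -/
def OneLOCCInstr.comp {X Y Z : Type} [Fintype X] [DecidableEq X] [Fintype Y] [DecidableEq Y]
    [Fintype Z] [DecidableEq Z] {m : ℕ} (T : OneLOCCInstr X Y m) (x : Fin m)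
    (ω : Matrix ((X × Y) × Z) ((X × Y) × Z) ℂ) : Matrix (Y × Z) (Y × Z) ℂ :=
  ∑ k, ∑ i, ∑ j,
    ptrLeft (((T.A k i ⊗ₖ T.B k x j) ⊗ₖ (1 : Matrix Z Z ℂ)) * ω *
             ((T.A k i ⊗ₖ T.B k x j) ⊗ₖ (1 : Matrix Z Z ℂ))ᴴ)

/-- The classical output distribution T^c of the instrument on a state of AB. -/
def OneLOCCInstr.cOut {X Y : Type} [Fintype X] [DecidableEq X] [Fintype Y] [DecidableEq Y]
    {m : ℕ} (T : OneLOCCInstr X Y m) (ω : Matrix (X × Y) (X × Y) ℂ) : Fin m → ℝ :=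
  fun x => (∑ k, ∑ i, ∑ j,
    ((T.A k i ⊗ₖ T.B k x j) * ω * (T.A k i ⊗ₖ T.B k x j)ᴴ).trace).re

/-- The quantum output T^q ⊗ id_E of the instrument on a state of (A⊗B)⊗E. -/
def OneLOCCInstr.qOut {X Y Z : Type} [Fintype X] [DecidableEq X] [Fintype Y] [DecidableEq Y]
    [Fintype Z] [DecidableEq Z] {m : ℕ} (T : OneLOCCInstr X Y m)
    (ω : Matrix ((X × Y) × Z) ((X × Y) × Z) ℂ) : Matrix (Y × Z) (Y × Z) ℂ :=
  ∑ x, T.comp x ω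

/-- The maximally mixed state. -/
def maxMixed (d : Type) [Fintype d] [DecidableEq d] : Matrix d d ℂ :=
  ((Fintype.card d : ℂ))⁻¹ • (1 : Matrix d d ℂ)

/-- Relative entropy of "entanglement" w.r.t. a set of states G and a set of
measurements Ms (measurements encoded as pairs of an outcome count and a POVM). -/
def ErG {d : Type} [Fintype d] [DecidableEq d]
    (G : Set (Matrix d d ℂ)) (Ms : Set (Σ m : ℕ, Fin m → Matrix d d ℂ))
    (ρ : Matrix d d ℂ) : ℝ≥0∞ :=
  ⨅ (σ : Matrix d d ℂ) (_ : σ ∈ G),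
    ⨆ (M : Σ m : ℕ, Fin m → Matrix d d ℂ) (_ : M ∈ Ms),
      klDiv2 (mProb M.2 ρ) (mProb M.2 σ)

/-- The distinguishability (pseudo-)norm ‖ρ−ρ'‖_Ms induced by a set of measurements. -/
def distMeas {d : Type} [Fintype d] [DecidableEq d]
    (Ms : Set (Σ m : ℕ, Fin m → Matrix d d ℂ)) (ρ ρ' : Matrix d d ℂ) : ℝ :=
  ⨆ (M : Σ m : ℕ, Fin m → Matrix d d ℂ) (_ : M ∈ Ms),
    ∑ x, |mProb M.2 ρ x - mProb M.2 ρ' x|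

/-- One-way LOCC distinguishability norm ‖ρ−ρ'‖_{1-LOCC}. -/
def oneLOCCDist {X Y : Type} [Fintype X] [DecidableEq X] [Fintype Y] [DecidableEq Y]
    (ρ ρ' : Matrix (X × Y) (X × Y) ℂ) : ℝ :=
  ⨆ (k : ℕ) (l : ℕ) (R : Fin k → Matrix X X ℂ) (S : Fin k → Fin l → Matrix Y Y ℂ)
    (_ : OneLOCCData R S),
    ∑ p, |mProb (oneLOCCPOVM R S) ρ p - mProb (oneLOCCPOVM R S) ρ' p|

/-- Reindexing a tripartite system (A⊗B)⊗E into the bipartite split B : (A⊗E). -/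
def splitBAE {X Y Z : Type} : (X × Y) × Z ≃ Y × (X × Z) where
  toFun := fun u => (u.1.2, (u.1.1, u.2))
  invFun := fun u => ((u.2.1, u.1), u.2.2)
  left_inv := fun _ => rfl
  right_inv := fun _ => rfl

/-- A tripartite state regarded as a bipartite state across B : AE. -/
def asBAE {X Y Z : Type} (ρ : Matrix ((X × Y) × Z) ((X × Y) × Z) ℂ) :
    Matrix (Y × (X × Z)) (Y × (X × Z)) ℂ :=
  Matrix.reindex splitBAE splitBAE ρ

end QIT

/-!
The mixture `x • σ + (1 - x) • τ` dominates `x • σ`, so under any POVM each outcome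
probability of the mixed state is at least `x` times that of `σ`; in the classical relative
entropy this costs at most `-log x`, because the weights of `ρ`'s outcome distribution sum
to one. Star-shapedness gives `G_x ⊆ G`, hence the first inequality.
-/

namespace QIT

open scoped MatrixOrder in
theorem _root_.Matrix.PosSemidef.trace_mul_nonneg {d : Type} [Fintype d] [DecidableEq d]
    {A B : Matrix d d ℂ} (hA : A.PosSemidef) (hB : B.PosSemidef) : 0 ≤ (A * B).trace := by
  have hsqrt : CFC.sqrt A * CFC.sqrt A = A := CFC.sqrt_mul_sqrt_self A hA.nonneg
  have hcycle : (A * B).trace = (CFC.sqrt A * B * (CFC.sqrt A)ᴴ).trace := by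
    rw [(CFC.sqrt_nonneg A).posSemidef.isHermitian.eq, trace_mul_comm (CFC.sqrt A * B),
      ← Matrix.mul_assoc, hsqrt]
  rw [hcycle]
  exact (hB.mul_mul_conjTranspose_same _).trace_nonneg

lemma maxMixed_posSemidef (d : Type) [Fintype d] [DecidableEq d] :
    (maxMixed d).PosSemidef :=
  PosSemidef.one.smul (inv_nonneg.mpr (Nat.cast_nonneg _))

lemma mProb_nonneg {d X : Type} [Fintype d] [DecidableEq d] {M : X → Matrix d d ℂ}
    {ρ : Matrix d d ℂ} (hρ : ρ.PosSemidef) (hM : ∀ x, (M x).PosSemidef) (x : X) :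
    0 ≤ mProb M ρ x :=
  (Complex.nonneg_iff.mp (hρ.trace_mul_nonneg (hM x))).1

lemma sum_mProb {d X : Type} [Fintype d] [Fintype X] [DecidableEq d]
    {M : X → Matrix d d ℂ} (hM : ∑ x, M x = 1) (ρ : Matrix d d ℂ) :
    ∑ x, mProb M ρ x = ρ.trace.re := by
  simp only [mProb, ← Complex.re_sum, ← trace_sum, ← Finset.mul_sum, hM, Matrix.mul_one]

lemma mProb_smul_add_smul {d X : Type} [Fintype d] (M : X → Matrix d d ℂ)
    (σ τ : Matrix d d ℂ) (a b : ℝ) (x : X) :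
    mProb M ((a : ℂ) • σ + (b : ℂ) • τ) x = a * mProb M σ x + b * mProb M τ x := by
  simp only [mProb, Matrix.add_mul, Matrix.smul_mul, trace_add, trace_smul, smul_eq_mul,
    Complex.add_re, Complex.re_ofReal_mul]

lemma mul_logb_div_le {p q q' c : ℝ} (hp : 0 ≤ p) (hq : 0 ≤ q) (hc : 0 < c)
    (hqq' : c * q ≤ q') (hsupp : q = 0 → p = 0) :
    p * Real.logb 2 (p / q') ≤ p * Real.logb 2 (p / q) + p * -Real.logb 2 c := by
  rcases hp.eq_or_lt with rfl | hp
  · simp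
  have hq : 0 < q := hq.lt_of_ne fun h => hp.ne' (hsupp h.symm)
  calc p * Real.logb 2 (p / q') ≤ p * Real.logb 2 (p / (c * q)) := by
        gcongr
        · norm_num
        · exact div_pos hp ((mul_pos hc hq).trans_le hqq')
    _ = p * Real.logb 2 (p / q) + p * -Real.logb 2 c := by
        rw [div_mul_eq_div_div_swap, Real.logb_div (by positivity) hc.ne']
        ring

lemma klDiv2_le_of_mul_le {X : Type} [Fintype X] {P Q Q' : X → ℝ} (hP : ∀ i, 0 ≤ P i)
    (hP1 : ∑ i, P i = 1) (hQ : ∀ i, 0 ≤ Q i) {c : ℝ} (hc : 0 < c)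
    (hQQ' : ∀ i, c * Q i ≤ Q' i) :
    klDiv2 P Q' ≤ klDiv2 P Q + ENNReal.ofReal (-Real.logb 2 c) := by
  by_cases hsupp : ∀ i, Q i = 0 → P i = 0
  · have hsupp' : ∀ i, Q' i = 0 → P i = 0 := fun i h =>
      hsupp i (le_antisymm (by nlinarith [hQQ' i]) (hQ i))
    rw [klDiv2, if_pos hsupp', klDiv2, if_pos hsupp]
    refine (ENNReal.ofReal_le_ofReal ?_).trans ENNReal.ofReal_add_le
    calc ∑ i, P i * Real.logb 2 (P i / Q' i)
        ≤ ∑ i, (P i * Real.logb 2 (P i / Q i) + P i * -Real.logb 2 c) :=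
          Finset.sum_le_sum fun i _ => mul_logb_div_le (hP i) (hQ i) hc (hQQ' i) (hsupp i)
      _ = ∑ i, P i * Real.logb 2 (P i / Q i) + -Real.logb 2 c := by
          rw [Finset.sum_add_distrib, ← Finset.sum_mul, hP1, one_mul]
  · simp [klDiv2, if_neg hsupp]

variable {d : Type} [Fintype d] [DecidableEq d] {Ms : Set (Σ m : ℕ, Fin m → Matrix d d ℂ)}
  {ρ : Matrix d d ℂ}

lemma ErG_anti {G G' : Set (Matrix d d ℂ)} (h : G' ⊆ G) : ErG G Ms ρ ≤ ErG G' Ms ρ :=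
  biInf_mono fun _ hσ => h hσ

lemma ErG_le_add {G G' : Set (Matrix d d ℂ)} {c : ℝ≥0∞}
    (h : ∀ σ ∈ G, ∃ σ' ∈ G', ∀ M ∈ Ms,
      klDiv2 (mProb M.2 ρ) (mProb M.2 σ') ≤ klDiv2 (mProb M.2 ρ) (mProb M.2 σ) + c) :
    ErG G' Ms ρ ≤ ErG G Ms ρ + c := by
  simp only [ErG, ENNReal.iInf_add]
  refine le_iInf₂ fun σ hσ => ?_
  obtain ⟨σ', hσ', hle⟩ := h σ hσ
  refine (iInf₂_le σ' hσ').trans (iSup₂_le fun M hM => (hle M hM).trans ?_)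
  gcongr
  exact le_iSup₂ (f := fun M (_ : M ∈ Ms) => klDiv2 (mProb M.2 ρ) (mProb M.2 σ)) M hM

end QIT

open QIT

variable {dA dB dE : Type} [Fintype dA] [DecidableEq dA] [Fintype dB] [DecidableEq dB]
  [Fintype dE] [DecidableEq dE]

/-- Eq. (12): comparing E^{(G)}_{r,M} and E^{(G_x)}_{r,M} for the shrunken set
G_x = xG + (1−x)τ of a star-shaped set G:
E^{(G)}_{r,M}(ρ) ≤ E^{(G_x)}_{r,M}(ρ) ≤ E^{(G)}_{r,M}(ρ) − log x. -/
theorem ErG_shrunken {d : Type} [Fintype d] [DecidableEq d]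
    (Ms : Set (Σ m : ℕ, Fin m → Matrix d d ℂ)) (hMs : ∀ M ∈ Ms, IsPOVM M.2)
    (G : Set (Matrix d d ℂ)) (hG : ∀ σ ∈ G, IsState σ)
    (hstar : ∀ σ ∈ G, ∀ p : ℝ, 0 ≤ p → p ≤ 1 →
        ((p : ℂ) • σ + (((1 - p : ℝ)) : ℂ) • maxMixed d) ∈ G)
    (x : ℝ) (hx0 : 0 < x) (hx1 : x ≤ 1)
    (ρ : Matrix d d ℂ) (hρ : IsState ρ) :
    ErG G Ms ρ ≤
        ErG ((fun σ => (x : ℂ) • σ + (((1 - x : ℝ)) : ℂ) • maxMixed d) '' G) Ms ρ ∧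
    ErG ((fun σ => (x : ℂ) • σ + (((1 - x : ℝ)) : ℂ) • maxMixed d) '' G) Ms ρ ≤
        ErG G Ms ρ + ENNReal.ofReal (-(Real.logb 2 x)) := by
  constructor
  · exact ErG_anti (Set.image_subset_iff.2 fun σ hσ => hstar σ hσ x hx0.le hx1)
  · refine ErG_le_add fun σ hσ => ⟨_, Set.mem_image_of_mem _ hσ, fun M hM => ?_⟩
    obtain ⟨hMpsd, hMsum⟩ := hMs M hM
    refine klDiv2_le_of_mul_le (mProb_nonneg hρ.1 hMpsd) ?_ (mProb_nonneg (hG σ hσ).1 hMpsd)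
      hx0 fun i => ?_
    · rw [sum_mProb hMsum, hρ.2, Complex.one_re]
    · rw [mProb_smul_add_smul]
      exact le_add_of_nonneg_right
        (mul_nonneg (sub_nonneg.2 hx1) (mProb_nonneg (maxMixed_posSemidef d) hMpsd i))
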